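/- arXiv:1702.02070 — 2 statements merged into one kernel-verified Lean document; each statement's English description precedes it below -/
import Mathlib

section
/- The lowest eigenvalue of H = T + V is zero if and only if p_0 = 0 and V φ_0 = 0, where φ_0 is the eigenvector of T corresponding to its smallest eigenvalue p_0. -/
open scoped InnerProductSpace

/-- For `H = T + V` with `T = ∑ₙ pₙ|φₙ⟩⟨φₙ|` (non-degenerate eigenvalues `0 ≤ p₀ < p₁ < ⋯`,
`∑(1+pₙ)⁻¹ < ∞`) and `V` positive bounded, the lowest eigenvalue of `T + V` is zero (i.e.
`T + V` annihilates some nonzero vector of the domain of `T`) if and only if `p₀ = 0` and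
`V φ₀ = 0`. -/
theorem stmt8 {H : Type*} [NormedAddCommGroup H] [InnerProductSpace ℂ H] [CompleteSpace H]
    (e : HilbertBasis ℕ ℂ H) (p : ℕ → ℝ)
    (hp0 : 0 ≤ p 0) (hpmono : StrictMono p)
    (hpsum : Summable fun n => (1 + p n)⁻¹)
    (V : H →L[ℂ] H) (hV : V.IsPositive) :
    (∃ x : H, x ≠ 0 ∧ (Summable fun n => (p n) ^ 2 * ‖⟪(e n : H), x⟫_ℂ‖ ^ 2) ∧
        (∑' n, ((p n : ℂ) * ⟪(e n : H), x⟫_ℂ) • e n) + V x = 0) ↔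
      (p 0 = 0 ∧ V (e 0) = 0) := by
  have ortho := e.orthonormal
  have hpn : ∀ n, 0 ≤ p n := fun n => hp0.trans (hpmono.monotone (Nat.zero_le n))
  constructor
  · rintro ⟨x, hx, hsum, heq⟩
    set c : ℕ → ℂ := fun n => ⟪(e n : H), x⟫_ℂ with hc
    have hvsum : Summable (fun n => ((p n : ℂ) * c n) • (e n : H)) := by
      have h2 : Summable (fun n => ‖(p n : ℂ) * c n‖ ^ 2) := by
        convert hsum using 2 with n
        simp [norm_mul, mul_pow, sq_abs]
        exact Or.inl rfl
      have := (ortho.orthogonalFamily.summable_iff_norm_sq_summable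
        (fun n => (p n : ℂ) * c n)).2 h2
      simpa [LinearIsometry.toSpanSingleton_apply] using this
    have hxen : ∀ n, ⟪x, (e n : H)⟫_ℂ = (starRingEnd ℂ) (c n) := fun n =>
      (inner_conj_symm x (e n : H)).symm
    have hCsum : Summable (fun n => ((p n : ℂ) * c n) * (starRingEnd ℂ) (c n)) := by
      have h := hvsum.map (innerSL ℂ x).toLinearMap.toAddMonoidHom (innerSL ℂ x).continuous
      refine h.congr fun n => ?_
      show ⟪x, ((p n : ℂ) * c n) • (e n : H)⟫_ℂ = _
      rw [inner_smul_right, hxen]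
    have h1 : ⟪x, (∑' n, ((p n : ℂ) * c n) • (e n : H))⟫_ℂ =
        ∑' n, ((p n : ℂ) * c n) * (starRingEnd ℂ) (c n) := by
      have := (innerSL ℂ x).map_tsum hvsum
      rw [show (innerSL ℂ x) (∑' n, ((p n : ℂ) * c n) • (e n : H)) =
        ⟪x, (∑' n, ((p n : ℂ) * c n) • (e n : H))⟫_ℂ from rfl] at this
      rw [this]
      refine tsum_congr fun n => ?_
      show ⟪x, ((p n : ℂ) * c n) • (e n : H)⟫_ℂ = _
      rw [inner_smul_right, hxen]
    have hkey : (∑' n, ((p n : ℂ) * c n) * (starRingEnd ℂ) (c n)) + ⟪x, V x⟫_ℂ = 0 := by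
      rw [← h1, ← inner_add_right]
      have heq' : (∑' n, ((p n : ℂ) * c n) • (e n : H)) + V x = 0 := heq
      rw [heq', inner_zero_right]
    -- real parts
    set g : ℕ → ℝ := fun n => p n * ‖c n‖ ^ 2 with hg
    have hterm : ∀ n, ((p n : ℂ) * c n) * (starRingEnd ℂ) (c n) = ((g n : ℝ) : ℂ) := by
      intro n
      simp only [hg]
      rw [mul_assoc, Complex.mul_conj]
      push_cast
      rw [Complex.normSq_eq_norm_sq]
      norm_num [sq_abs]
    have hgsum : Summable g := by
      have h := hCsum.map Complex.reCLM.toLinearMap.toAddMonoidHom Complex.reCLM.continuous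
      refine h.congr fun n => ?_
      show Complex.reCLM (((p n : ℂ) * c n) * (starRingEnd ℂ) (c n)) = g n
      rw [hterm n]
      simp
    have hgnn : ∀ n, 0 ≤ g n := fun n => mul_nonneg (hpn n) (by positivity)
    have hVnn : 0 ≤ Complex.re ⟪x, V x⟫_ℂ := by
      have := hV.2 x
      rwa [ContinuousLinearMap.reApplyInnerSelf, inner_re_symm] at this
    have hre : (∑' n, g n) + Complex.re ⟪x, V x⟫_ℂ = 0 := by
      have := congrArg Complex.re hkey
      rw [Complex.add_re, Complex.zero_re] at this
      rw [← this]
      congr 1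
      rw [← Complex.reCLM_apply, Complex.reCLM.map_tsum hCsum]
      refine tsum_congr fun n => ?_
      rw [hterm n]; simp
    have hts0 : ∑' n, g n = 0 := le_antisymm (by linarith) (tsum_nonneg hgnn)
    have hgz : ∀ n, g n = 0 := fun n =>
      le_antisymm (hts0 ▸ hgsum.le_tsum n fun m _ => hgnn m) (hgnn n)
    have hcz : ∀ n ≠ 0, c n = 0 := by
      intro n hn
      have hpnpos : 0 < p n := lt_of_le_of_lt hp0 (hpmono (Nat.pos_of_ne_zero hn))
      have := hgz n
      have : ‖c n‖ ^ 2 = 0 := by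
        rcases mul_eq_zero.1 this with h | h
        · exact absurd h (ne_of_gt hpnpos)
        · exact h
      simpa using pow_eq_zero_iff (n := 2) (by norm_num) |>.1 this
    have hc0 : c 0 ≠ 0 := by
      intro h0
      apply hx
      have hs : HasSum (fun i => e.repr x i • (e i : H)) x := e.hasSum_repr x
      have hz : (fun i => e.repr x i • (e i : H)) = fun _ => (0 : H) := by
        funext i
        rcases eq_or_ne i 0 with rfl | hi
        · rw [e.repr_apply_apply]; change c 0 • _ = _; rw [h0, zero_smul]
        · rw [e.repr_apply_apply]; change c i • _ = _; rw [hcz i hi, zero_smul]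
      rw [hz] at hs
      exact hs.unique hasSum_zero
    have hp00 : p 0 = 0 := by
      have := hgz 0
      rcases mul_eq_zero.1 this with h | h
      · exact h
      · exact absurd (pow_eq_zero_iff (n := 2) (by norm_num) |>.1 h)
          (by simpa using hc0)
    refine ⟨hp00, ?_⟩
    have hT0 : (∑' n, ((p n : ℂ) * c n) • (e n : H)) = 0 := by
      have : (fun n => ((p n : ℂ) * c n) • (e n : H)) = fun _ => (0 : H) := by
        funext n
        rcases eq_or_ne n 0 with rfl | hn
        · rw [hp00]; simp
        · rw [hcz n hn]; simp
      rw [this, tsum_zero]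
    rw [hT0, zero_add] at heq
    -- x = c 0 • e 0
    have hxe : x = c 0 • (e 0 : H) := by
      have hs : HasSum (fun i => e.repr x i • (e i : H)) x := e.hasSum_repr x
      have hs2 : HasSum (fun i : ℕ => if i = 0 then c 0 • (e 0 : H) else 0) (c 0 • (e 0 : H)) := by
        exact hasSum_ite_eq 0 _
      have hz : (fun i => e.repr x i • (e i : H)) =
          fun i : ℕ => if i = 0 then c 0 • (e 0 : H) else 0 := by
        funext i
        rcases eq_or_ne i 0 with rfl | hi
        · simp [e.repr_apply_apply]; rfl
        · rw [e.repr_apply_apply]; change c i • _ = _; rw [hcz i hi, zero_smul, if_neg hi]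
      rw [hz] at hs
      exact hs.unique hs2
    rw [hxe, map_smul] at heq
    rcases smul_eq_zero.1 heq with h | h
    · exact absurd h hc0
    · exact h
  · rintro ⟨hp00, hVe⟩
    refine ⟨e 0, ?_, ?_, ?_⟩
    · intro h
      have := ortho.1 0
      rw [h, norm_zero] at this
      norm_num at this
    · have : (fun n => (p n) ^ 2 * ‖⟪(e n : H), (e 0 : H)⟫_ℂ‖ ^ 2) = fun _ => (0 : ℝ) := by
        funext n
        rcases eq_or_ne n 0 with rfl | hn
        · rw [hp00]; norm_num
        · rw [ortho.2 hn]; simp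
      rw [this]; exact summable_zero
    · have hT : (fun n => ((p n : ℂ) * ⟪(e n : H), (e 0 : H)⟫_ℂ) • (e n : H)) =
          fun _ => (0 : H) := by
        funext n
        rcases eq_or_ne n 0 with rfl | hn
        · rw [hp00]; simp
        · rw [ortho.2 hn]; simp
      rw [hT, tsum_zero, zero_add, hVe]
end

section
/- Let P and Q be orthogonal projections on a Hilbert space with P ∧ Q = 0 (the only subvector common to their ranges is 0), and suppose PQP is compact with largest eigenvalue a₊ < 1. Then for every unit vector f, ⟨f|Pf⟩ + ⟨f|Qf⟩ ≤ 1 + √a₊ < 2. -/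
/-! Write `a = P f`, `b = Q f` and `s = re ⟪f, P f⟫ + re ⟪f, Q f⟫ = ‖a‖² + ‖b‖²`.
Cauchy–Schwarz gives `s = re ⟪f, a + b⟫ ≤ ‖a + b‖`, while `⟪a, b⟫ = ⟪QP a, b⟫` gives
`|⟪a, b⟫| ≤ ‖QP‖ ‖a‖ ‖b‖`, hence `‖a + b‖² ≤ (1 + ‖QP‖) s`. Together, `s² ≤ (1 + ‖QP‖) s`,
so `s ≤ 1 + ‖QP‖`; finally `‖QP‖² = ‖PQP‖` by the C⋆-identity. -/

open scoped InnerProductSpace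
open ContinuousLinearMap RCLike

theorem IsStarProjection.norm_mul_mul_eq_norm_mul_sq {A : Type*} [NonUnitalNormedRing A]
    [StarRing A] [CStarRing A] {p q : A} (hp : IsSelfAdjoint p) (hq : IsStarProjection q) :
    ‖p * q * p‖ = ‖q * p‖ ^ 2 := by
  have : star (q * p) * (q * p) = p * q * p := by
    rw [star_mul, hp.star_eq, hq.isSelfAdjoint.star_eq, mul_assoc, ← mul_assoc q,
      hq.isIdempotentElem.eq, mul_assoc]
  rw [← this, CStarRing.norm_star_mul_self, sq]

theorem norm_add_sq_le_of_re_inner_le {𝕜 E : Type*} [RCLike 𝕜] [NormedAddCommGroup E]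
    [InnerProductSpace 𝕜 E] {a b : E} {c : ℝ} (hc : 0 ≤ c)
    (hab : re ⟪a, b⟫_𝕜 ≤ c * (‖a‖ * ‖b‖)) :
    ‖a + b‖ ^ 2 ≤ (1 + c) * (‖a‖ ^ 2 + ‖b‖ ^ 2) := by
  rw [@norm_add_sq 𝕜]
  nlinarith [mul_nonneg hc (sq_nonneg (‖a‖ - ‖b‖))]

section

variable {𝕜 E : Type*} [RCLike 𝕜] [NormedAddCommGroup E] [InnerProductSpace 𝕜 E]
  [CompleteSpace E] {P Q : E →L[𝕜] E}

theorem IsStarProjection.re_inner_apply_eq_norm_sq (hP : IsStarProjection P) (f : E) :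
    re ⟪f, P f⟫_𝕜 = ‖P f‖ ^ 2 := by
  have hPP : P (P f) = P f := congr($(hP.isIdempotentElem.eq) f)
  rw [← hPP, ← adjoint_inner_left, hP.isSelfAdjoint.adjoint_eq, hPP, inner_self_eq_norm_sq]

theorem norm_inner_apply_apply_le (hP : IsIdempotentElem P) (hQ : IsStarProjection Q) (f g : E) :
    ‖⟪P f, Q g⟫_𝕜‖ ≤ ‖Q * P‖ * ‖P f‖ * ‖Q g‖ := by
  have hPP : P (P f) = P f := congr($(hP.eq) f)
  have hQQ : Q (Q g) = Q g := congr($(hQ.isIdempotentElem.eq) g)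
  have : ⟪P f, Q g⟫_𝕜 = ⟪(Q * P) (P f), Q g⟫_𝕜 := by
    rw [mul_apply_eq_comp, hPP, ← hQQ, ← adjoint_inner_left, hQ.isSelfAdjoint.adjoint_eq, hQQ]
  rw [this]
  exact (norm_inner_le_norm _ _).trans (by gcongr; exact (Q * P).le_opNorm _)

theorem IsStarProjection.re_inner_add_re_inner_le (hP : IsStarProjection P)
    (hQ : IsStarProjection Q) {f : E} (hf : ‖f‖ ≤ 1) :
    re ⟪f, P f⟫_𝕜 + re ⟪f, Q f⟫_𝕜 ≤ 1 + ‖Q * P‖ := by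
  set s := re ⟪f, P f⟫_𝕜 + re ⟪f, Q f⟫_𝕜 with hs_def
  have hs : s = ‖P f‖ ^ 2 + ‖Q f‖ ^ 2 := by
    rw [hs_def, hP.re_inner_apply_eq_norm_sq, hQ.re_inner_apply_eq_norm_sq]
  have hs_le : s ≤ ‖P f + Q f‖ := calc
    s = re ⟪f, P f + Q f⟫_𝕜 := by rw [inner_add_right, map_add]
    _ ≤ ‖f‖ * ‖P f + Q f‖ := (re_le_norm _).trans (norm_inner_le_norm _ _)
    _ ≤ ‖P f + Q f‖ := mul_le_of_le_one_left (norm_nonneg _) hf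
  have hcross : re ⟪P f, Q f⟫_𝕜 ≤ ‖Q * P‖ * (‖P f‖ * ‖Q f‖) := by
    rw [← mul_assoc]
    exact (re_le_norm _).trans (norm_inner_apply_apply_le hP.isIdempotentElem hQ f f)
  have hsq : s ^ 2 ≤ (1 + ‖Q * P‖) * s := calc
    s ^ 2 ≤ ‖P f + Q f‖ ^ 2 := by gcongr; rw [hs]; positivity
    _ ≤ (1 + ‖Q * P‖) * s := by
      rw [hs]; exact norm_add_sq_le_of_re_inner_le (norm_nonneg _) hcross
  nlinarith [norm_nonneg (Q * P)]

end

theorem stmt19_general {H : Type*} [NormedAddCommGroup H] [InnerProductSpace ℂ H] [CompleteSpace H]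
    (P Q : H →L[ℂ] H)
    (hP : IsSelfAdjoint P) (hPidem : P ∘L P = P)
    (hQ : IsSelfAdjoint Q) (hQidem : Q ∘L Q = Q)
    (hlt : ‖P ∘L Q ∘L P‖ < 1) :
    ∀ f : H, ‖f‖ = 1 →
      (⟪f, P f⟫_ℂ).re + (⟪f, Q f⟫_ℂ).re ≤ 1 + Real.sqrt ‖P ∘L Q ∘L P‖ ∧
        1 + Real.sqrt ‖P ∘L Q ∘L P‖ < 2 := by
  intro f hf
  have hPproj : IsStarProjection P := ⟨hPidem, hP⟩
  have hQproj : IsStarProjection Q := ⟨hQidem, hQ⟩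
  have hsqrt : Real.sqrt ‖P ∘L Q ∘L P‖ = ‖Q * P‖ := by
    rw [← mul_def, ← mul_def, ← mul_assoc, hQproj.norm_mul_mul_eq_norm_mul_sq hP,
      Real.sqrt_sq (norm_nonneg _)]
  refine ⟨hsqrt ▸ hPproj.re_inner_add_re_inner_le hQproj hf.le, ?_⟩
  have : Real.sqrt ‖P ∘L Q ∘L P‖ < 1 := (Real.sqrt_lt' one_pos).2 (by rwa [one_pow])
  linarith

/-- Let `P` and `Q` be orthogonal projections with trivial intersection of ranges
(`P ∧ Q = 0`), and suppose `PQP` is compact with largest eigenvalue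
`a₊ = ‖PQP‖ < 1`.  Then for every unit vector `f`,
`⟨f|Pf⟩ + ⟨f|Qf⟩ ≤ 1 + √a₊ < 2`. -/
theorem stmt19 {H : Type*} [NormedAddCommGroup H] [InnerProductSpace ℂ H] [CompleteSpace H]
    (P Q : H →L[ℂ] H)
    (hP : IsSelfAdjoint P) (hPidem : P ∘L P = P)
    (hQ : IsSelfAdjoint Q) (hQidem : Q ∘L Q = Q)
    (hmeet : ∀ x : H, P x = x → Q x = x → x = 0)
    (hcompact : IsCompactOperator (P ∘L Q ∘L P))
    (hlt : ‖P ∘L Q ∘L P‖ < 1) :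
    ∀ f : H, ‖f‖ = 1 →
      (⟪f, P f⟫_ℂ).re + (⟪f, Q f⟫_ℂ).re ≤ 1 + Real.sqrt ‖P ∘L Q ∘L P‖ ∧
        1 + Real.sqrt ‖P ∘L Q ∘L P‖ < 2 :=
  stmt19_general P Q hP hPidem hQ hQidem hlt
end
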